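/- Fix masses m₀ = (m_1,...,m_N) ∈ ℝ_+^N, a permutation σ ∈ S_N, and τ ∈ S_{N+K} compatible with σ. Define M_{N+K}(τ, m) as the infimum of U(x, m) over configurations x with ordering τ and I(x, m) = 1, and similarly M_N(σ, m₀). Then lim_{ε→0} M_{N+K}(τ, m(ε)) = M_N(σ, m₀), where m(ε) = (m_1,...,m_N, ε m_{N+1},..., ε m_{N+K}). -/
import Mathlib


open Finset

noncomputable def Upot {M : ℕ} (m : Fin M → ℝ) (x : Fin M → ℝ) : ℝ :=
  ∑ i, ∑ j ∈ Finset.Ioi i, m i * m j / |x i - x j|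

noncomputable def inertia {M : ℕ} (m : Fin M → ℝ) (x : Fin M → ℝ) : ℝ :=
  ∑ i, m i * x i ^ 2

/-- The minimal normalized potential for the ordering `π` and masses `m`. -/
noncomputable def minVal {M : ℕ} (π : Equiv.Perm (Fin M)) (m : Fin M → ℝ) : ℝ :=
  sInf {u : ℝ | ∃ x : Fin M → ℝ, StrictMono (x ∘ π) ∧ inertia m x = 1 ∧ u = Upot m x}

section Aux

lemma Upot_pairs {M : ℕ} (m x : Fin M → ℝ) :
    Upot m x = ∑ p ∈ (Finset.univ ×ˢ Finset.univ).filter (fun p : Fin M × Fin M => p.1 < p.2),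
      m p.1 * m p.2 / |x p.1 - x p.2| := by
  rw [Upot, Finset.sum_filter, Finset.sum_product]
  congr 1; ext i
  rw [← Finset.sum_filter]
  congr 1; ext j; simp

lemma Upot_nonneg {M : ℕ} {m : Fin M → ℝ} (hm : ∀ i, 0 ≤ m i) (x : Fin M → ℝ) :
    0 ≤ Upot m x := by
  apply Finset.sum_nonneg; intro i _
  apply Finset.sum_nonneg; intro j _
  exact div_nonneg (mul_nonneg (hm i) (hm j)) (abs_nonneg _)

lemma inertia_nonneg {M : ℕ} {m : Fin M → ℝ} (hm : ∀ i, 0 ≤ m i) (x : Fin M → ℝ) :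
    0 ≤ inertia m x := by
  apply Finset.sum_nonneg; intro i _
  exact mul_nonneg (hm i) (sq_nonneg _)

lemma Upot_scale {M : ℕ} (m x : Fin M → ℝ) {c : ℝ} (hc : 0 < c) :
    Upot m (fun i => c * x i) = Upot m x / c := by
  rw [Upot, Upot, Finset.sum_div]
  congr 1; ext i
  rw [Finset.sum_div]
  congr 1; ext j
  rw [← mul_sub, abs_mul, abs_of_pos hc, div_div, mul_comm c, ← div_div]

lemma inertia_scale {M : ℕ} (m x : Fin M → ℝ) (c : ℝ) :
    inertia m (fun i => c * x i) = c ^ 2 * inertia m x := by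
  rw [inertia, inertia, Finset.mul_sum]
  congr 1; ext i; ring

lemma Upot_subsingleton {M : ℕ} (hM : M ≤ 1) (m x : Fin M → ℝ) : Upot m x = 0 := by
  rw [Upot]
  apply Finset.sum_eq_zero; intro i _
  apply Finset.sum_eq_zero; intro j hj
  exfalso
  have h := Finset.mem_Ioi.mp hj
  rw [Fin.lt_def] at h
  have := i.isLt; have := j.isLt
  omega

lemma minSet_nonempty {M : ℕ} (hM : 0 < M) (π : Equiv.Perm (Fin M)) {m : Fin M → ℝ}
    (hm : ∀ i, 0 < m i) :
    {u : ℝ | ∃ x : Fin M → ℝ, StrictMono (x ∘ π) ∧ inertia m x = 1 ∧ u = Upot m x}.Nonempty := by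
  set y : Fin M → ℝ := fun i => ((π.symm i : ℕ) : ℝ) + 1 with hy
  have hI : 0 < inertia m y := by
    apply Finset.sum_pos
    · intro i _
      apply mul_pos (hm i)
      positivity
    · exact ⟨⟨0, hM⟩, Finset.mem_univ _⟩
  set c : ℝ := (Real.sqrt (inertia m y))⁻¹ with hc
  have hcpos : 0 < c := by positivity
  refine ⟨Upot m (fun i => c * y i), fun i => c * y i, ?_, ?_, rfl⟩
  · intro a b hab
    simp only [Function.comp_apply, hy, Equiv.symm_apply_apply]
    have : (a : ℕ) < b := hab
    have : ((a:ℕ):ℝ) < ((b:ℕ):ℝ) := by exact_mod_cast this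
    nlinarith
  · rw [inertia_scale, hc]
    rw [← Real.sqrt_inv, Real.sq_sqrt (by positivity)]
    field_simp

lemma minSet_bddBelow {M : ℕ} (π : Equiv.Perm (Fin M)) {m : Fin M → ℝ}
    (hm : ∀ i, 0 ≤ m i) :
    BddBelow {u : ℝ | ∃ x : Fin M → ℝ, StrictMono (x ∘ π) ∧ inertia m x = 1 ∧ u = Upot m x} := by
  refine ⟨0, fun u hu => ?_⟩
  obtain ⟨x, -, -, rfl⟩ := hu
  exact Upot_nonneg hm x

lemma minVal_of_zero {M : ℕ} (hM : M = 0) (π : Equiv.Perm (Fin M)) (m : Fin M → ℝ) :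
    minVal π m = 0 := by
  subst hM
  rw [minVal]
  convert Real.sInf_empty
  rw [Set.eq_empty_iff_forall_notMem]
  rintro u ⟨x, -, hI, -⟩
  rw [inertia] at hI
  simp at hI

def pairEmb (N K : ℕ) : Fin N × Fin N ↪ Fin (N + K) × Fin (N + K) :=
  ⟨Prod.map (Fin.castAdd K) (Fin.castAdd K),
   Function.Injective.prodMap (Fin.castAdd_injective N K) (Fin.castAdd_injective N K)⟩

lemma mem_pairEmb_iff {N K : ℕ} (q : Fin (N+K) × Fin (N+K)) :
    q ∈ ((Finset.univ ×ˢ Finset.univ).filter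
        (fun p : Fin N × Fin N => p.1 < p.2)).map (pairEmb N K) ↔
      ((q.1 : ℕ) < N ∧ (q.2 : ℕ) < N ∧ q.1 < q.2) := by
  constructor
  · rintro hq
    rw [Finset.mem_map] at hq
    obtain ⟨p, hp, rfl⟩ := hq
    rw [Finset.mem_filter] at hp
    refine ⟨p.1.isLt, p.2.isLt, ?_⟩
    have := hp.2
    simp only [pairEmb, Function.Embedding.coeFn_mk, Prod.map_fst, Prod.map_snd]
    rw [Fin.lt_def] at this ⊢
    simpa using this
  · rintro ⟨h1, h2, h12⟩
    rw [Finset.mem_map]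
    refine ⟨(⟨(q.1:ℕ), h1⟩, ⟨(q.2:ℕ), h2⟩), ?_, ?_⟩
    · rw [Finset.mem_filter]
      refine ⟨by simp, ?_⟩
      rw [Fin.lt_def] at h12 ⊢
      simpa using h12
    · simp only [pairEmb, Function.Embedding.coeFn_mk, Prod.map]
      exact Prod.ext (Fin.ext (by simp)) (Fin.ext (by simp))

lemma Upot_trunc_le {N K : ℕ} (m₀ : Fin N → ℝ) (m' : Fin (N+K) → ℝ)
    (hm' : ∀ i, 0 ≤ m' i) (hagree : ∀ i : Fin N, m' (Fin.castAdd K i) = m₀ i)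
    (x : Fin (N+K) → ℝ) :
    Upot m₀ (fun i => x (Fin.castAdd K i)) ≤ Upot m' x := by
  rw [Upot_pairs, Upot_pairs]
  have key : ∑ p ∈ (Finset.univ ×ˢ Finset.univ).filter (fun p : Fin N × Fin N => p.1 < p.2),
      m₀ p.1 * m₀ p.2 / |x (Fin.castAdd K p.1) - x (Fin.castAdd K p.2)|
      = ∑ q ∈ ((Finset.univ ×ˢ Finset.univ).filter
          (fun p : Fin N × Fin N => p.1 < p.2)).map (pairEmb N K),
        m' q.1 * m' q.2 / |x q.1 - x q.2| := by
    rw [Finset.sum_map]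
    apply Finset.sum_congr rfl
    intro p _
    simp [pairEmb, hagree]
  rw [key]
  apply Finset.sum_le_sum_of_subset_of_nonneg
  · intro q hq
    rw [mem_pairEmb_iff] at hq
    rw [Finset.mem_filter]
    exact ⟨by simp, hq.2.2⟩
  · intro q _ _
    exact div_nonneg (mul_nonneg (hm' _) (hm' _)) (abs_nonneg _)

lemma Upot_trunc_eq {N K : ℕ} (m₀ : Fin N → ℝ) (m' : Fin (N+K) → ℝ)
    (hagree : ∀ i : Fin N, m' (Fin.castAdd K i) = m₀ i)
    (hzero : ∀ j : Fin (N+K), N ≤ (j : ℕ) → m' j = 0)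
    (x : Fin (N+K) → ℝ) :
    Upot m' x = Upot m₀ (fun i => x (Fin.castAdd K i)) := by
  rw [Upot_pairs, Upot_pairs]
  have key : ∑ p ∈ (Finset.univ ×ˢ Finset.univ).filter (fun p : Fin N × Fin N => p.1 < p.2),
      m₀ p.1 * m₀ p.2 / |x (Fin.castAdd K p.1) - x (Fin.castAdd K p.2)|
      = ∑ q ∈ ((Finset.univ ×ˢ Finset.univ).filter
          (fun p : Fin N × Fin N => p.1 < p.2)).map (pairEmb N K),
        m' q.1 * m' q.2 / |x q.1 - x q.2| := by
    rw [Finset.sum_map]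
    apply Finset.sum_congr rfl
    intro p _
    simp [pairEmb, hagree]
  rw [key]
  symm
  apply Finset.sum_subset
  · intro q hq
    rw [mem_pairEmb_iff] at hq
    rw [Finset.mem_filter]
    exact ⟨by simp, hq.2.2⟩
  · intro q hq hq'
    rw [Finset.mem_filter] at hq
    rw [mem_pairEmb_iff] at hq'
    push_neg at hq'
    by_cases h1 : (q.1 : ℕ) < N
    · by_cases h2 : (q.2 : ℕ) < N
      · exact absurd hq.2 (not_lt.mpr (hq' h1 h2))
      · rw [hzero q.2 (le_of_not_gt h2), mul_zero, zero_div]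
    · rw [hzero q.1 (le_of_not_gt h1), zero_mul, zero_div]

lemma inertia_trunc_le {N K : ℕ} (m₀ : Fin N → ℝ) (m' : Fin (N+K) → ℝ)
    (hm' : ∀ i, 0 ≤ m' i) (hagree : ∀ i : Fin N, m' (Fin.castAdd K i) = m₀ i)
    (x : Fin (N+K) → ℝ) :
    inertia m₀ (fun i => x (Fin.castAdd K i)) ≤ inertia m' x := by
  rw [inertia, inertia, Fin.sum_univ_add]
  have h1 : ∑ i : Fin N, m₀ i * x (Fin.castAdd K i) ^ 2
      = ∑ i : Fin N, m' (Fin.castAdd K i) * x (Fin.castAdd K i) ^ 2 := by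
    apply Finset.sum_congr rfl; intro i _; rw [hagree]
  rw [h1]
  have h2 : 0 ≤ ∑ j : Fin K, m' (Fin.natAdd N j) * x (Fin.natAdd N j) ^ 2 := by
    apply Finset.sum_nonneg; intro j _; exact mul_nonneg (hm' _) (sq_nonneg _)
  linarith

lemma inertia_split {N K : ℕ} (m : Fin (N+K) → ℝ) (x : Fin (N+K) → ℝ) (ε : ℝ) :
    inertia (fun i => if (i:ℕ) < N then m i else ε * m i) x
      = inertia (fun i : Fin N => m (Fin.castAdd K i)) (fun i => x (Fin.castAdd K i))
        + ε * ∑ j : Fin K, m (Fin.natAdd N j) * x (Fin.natAdd N j) ^ 2 := by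
  rw [inertia, inertia, Fin.sum_univ_add, Finset.mul_sum]
  congr 1
  · apply Finset.sum_congr rfl
    intro i _
    rw [if_pos (by simpa using i.isLt)]
  · apply Finset.sum_congr rfl
    intro j _
    rw [if_neg (by simp)]
    ring

lemma exists_strictMono_extension {Mn Nn : ℕ} (hN : 0 < Nn) (p : Fin Nn → Fin Mn)
    (hp : StrictMono p) (z : Fin Nn → ℝ) (hz : StrictMono z) :
    ∃ g : Fin Mn → ℝ, StrictMono g ∧ ∀ n, g (p n) = z n := by
  obtain ⟨η, hη, hηle⟩ : ∃ η > 0, ∀ a a' : Fin Nn, a < a' → (Mn : ℝ) * η ≤ z a' - z a := by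
    rcases le_or_gt Nn 1 with h1 | h1
    · refine ⟨1, one_pos, fun a a' haa' => absurd haa' ?_⟩
      have := a'.isLt
      have := a.isLt
      rw [Fin.lt_def]
      omega
    · set S := (Finset.univ ×ˢ Finset.univ).filter (fun q : Fin Nn × Fin Nn => q.1 < q.2)
        with hS
      have hSne : S.Nonempty := by
        refine ⟨(⟨0, by omega⟩, ⟨1, by omega⟩), ?_⟩
        rw [hS, Finset.mem_filter]
        exact ⟨by simp, by simp [Fin.lt_def]⟩
      set G := S.inf' hSne (fun q => z q.2 - z q.1) with hG
      have hGpos : 0 < G := by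
        rw [hG, Finset.lt_inf'_iff]
        intro b hb
        rw [hS, Finset.mem_filter] at hb
        exact sub_pos.mpr (hz hb.2)
      refine ⟨G / (Mn + 1), by positivity, fun a a' haa' => ?_⟩
      have h1' : G ≤ z a' - z a := by
        have hmem : (a, a') ∈ S := by rw [hS, Finset.mem_filter]; exact ⟨by simp, haa'⟩
        exact Finset.inf'_le (fun q => z q.2 - z q.1) hmem
      have h2' : (Mn : ℝ) * (G / (Mn + 1)) ≤ G := by
        rw [← mul_div_assoc, div_le_iff₀ (by positivity)]
        nlinarith
      linarith
  set a : Fin Mn → Fin Nn := fun q =>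
    if h : (Finset.univ.filter fun n => p n ≤ q).Nonempty
    then (Finset.univ.filter fun n => p n ≤ q).max' h else ⟨0, hN⟩ with ha
  have hmem : ∀ q, (Finset.univ.filter fun n => p n ≤ q).Nonempty → p (a q) ≤ q := by
    intro q h
    simp only [ha]
    rw [dif_pos h]
    exact (Finset.mem_filter.mp (Finset.max'_mem _ h)).2
  have hnsp : ∀ n, a (p n) = n := by
    intro n
    have hne : (Finset.univ.filter fun k => p k ≤ p n).Nonempty := ⟨n, by simp⟩
    simp only [ha]
    rw [dif_pos hne]
    apply le_antisymm
    · apply Finset.max'_le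
      intro k hk
      exact hp.le_iff_le.mp (Finset.mem_filter.mp hk).2
    · exact Finset.le_max' _ _ (by simp)
  have hmono : ∀ q q', q ≤ q' → a q ≤ a q' := by
    intro q q' hqq'
    by_cases h : (Finset.univ.filter fun n => p n ≤ q).Nonempty
    · have hsub : (Finset.univ.filter fun n => p n ≤ q) ⊆
          (Finset.univ.filter fun n => p n ≤ q') := by
        intro n hn
        rw [Finset.mem_filter] at hn ⊢
        exact ⟨hn.1, hn.2.trans hqq'⟩
      have h' : (Finset.univ.filter fun n => p n ≤ q').Nonempty := h.mono hsub
      simp only [ha]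
      rw [dif_pos h, dif_pos h']
      exact Finset.max'_subset _ hsub
    · simp only [ha]
      rw [dif_neg h]
      split <;> exact Fin.mk_le_of_le_val (Nat.zero_le _)
  refine ⟨fun q => z (a q) + (((q : ℕ) : ℝ) - ((p (a q) : ℕ) : ℝ)) * η, ?_, ?_⟩
  · intro q q' hqq'
    show z (a q) + (((q : ℕ) : ℝ) - ((p (a q) : ℕ) : ℝ)) * η
      < z (a q') + (((q' : ℕ) : ℝ) - ((p (a q') : ℕ) : ℝ)) * η
    have haa' := hmono q q' hqq'.le
    have hql : ((q:ℕ):ℝ) < ((q':ℕ):ℝ) := by exact_mod_cast hqq'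
    rcases eq_or_lt_of_le haa' with heq | hlt
    · rw [← heq]
      have := mul_lt_mul_of_pos_right (sub_lt_sub_right hql ((p (a q) : ℕ):ℝ)) hη
      linarith
    · have hne' : (Finset.univ.filter fun n => p n ≤ q').Nonempty := by
        by_contra hemp
        have h0 : a q' = ⟨0, hN⟩ := by simp only [ha]; rw [dif_neg hemp]
        rw [h0] at hlt
        exact absurd hlt (by simp [Fin.lt_def])
      have hpa' : p (a q') ≤ q' := hmem q' hne'
      have hub : z (a q') ≤ z (a q') + (((q':ℕ):ℝ) - ((p (a q') : ℕ):ℝ)) * η := by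
        have : ((p (a q') : ℕ):ℝ) ≤ ((q':ℕ):ℝ) := by exact_mod_cast hpa'
        nlinarith
      have hlb : z (a q) + (((q:ℕ):ℝ) - ((p (a q) : ℕ):ℝ)) * η < z (a q') := by
        by_cases h : (Finset.univ.filter fun n => p n ≤ q).Nonempty
        · have hpa : p (a q) ≤ q := hmem q h
          have h1 : ((p (a q) : ℕ):ℝ) ≤ ((q:ℕ):ℝ) := by exact_mod_cast hpa
          have h2 : ((q:ℕ):ℝ) < (Mn:ℝ) := by exact_mod_cast q.isLt
          have h3 : (0:ℝ) ≤ ((p (a q) : ℕ):ℝ) := by positivity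
          have h4 : (((q:ℕ):ℝ) - ((p (a q) : ℕ):ℝ)) * η < (Mn:ℝ) * η := by
            apply mul_lt_mul_of_pos_right _ hη
            linarith
          have h5 := hηle (a q) (a q') hlt
          linarith
        · have hlt0 : q < p (a q) := by
            by_contra hge
            exact h ⟨a q, by simp [not_lt.mp hge]⟩
          have h1 : ((q:ℕ):ℝ) < ((p (a q) : ℕ):ℝ) := by exact_mod_cast hlt0
          have h2 : z (a q) ≤ z (a q') := hz.monotone haa'
          nlinarith
      linarith
  · intro n
    show z (a (p n)) + (((p n : ℕ) : ℝ) - ((p (a (p n)) : ℕ) : ℝ)) * η = z n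
    rw [hnsp n]
    simp

end Aux

/-- As the masses of the last `K` bodies tend to zero, the minimal potential for a
compatible ordering `τ` of `N+K` bodies tends to the minimal potential of the
`N`-body subproblem with ordering `σ`. -/
theorem minimal_value_limit {N K : ℕ} (m : Fin (N + K) → ℝ) (hm : ∀ i, 0 < m i)
    (m₀ : Fin N → ℝ) (hm₀ : m₀ = fun i => m (Fin.castAdd K i))
    (σ : Equiv.Perm (Fin N)) (τ : Equiv.Perm (Fin (N + K)))
    (hcompat : ∀ x : Fin (N + K) → ℝ, StrictMono (x ∘ τ) →
      StrictMono (fun n : Fin N => x (Fin.castAdd K (σ n)))) :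
    Filter.Tendsto
      (fun ε : ℝ => minVal τ (fun i : Fin (N + K) =>
        if (i : ℕ) < N then m i else ε * m i))
      (nhdsWithin 0 (Set.Ioi 0)) (nhds (minVal σ m₀)) := by
  have hm₀pos : ∀ i, 0 < m₀ i := by intro i; rw [hm₀]; exact hm _
  have hm₀agree : ∀ ε : ℝ, ∀ i : Fin N,
      (if ((Fin.castAdd K i : Fin (N+K)) : ℕ) < N then m (Fin.castAdd K i)
        else ε * m (Fin.castAdd K i)) = m₀ i := by
    intro ε i
    rw [if_pos (by simpa using i.isLt), hm₀]
  have hmεpos : ∀ ε : ℝ, 0 < ε → ∀ i : Fin (N+K),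
      0 < (if (i : ℕ) < N then m i else ε * m i) := by
    intro ε hε i
    split
    · exact hm i
    · exact mul_pos hε (hm i)
  rcases Nat.eq_zero_or_pos (N + K) with hNK | hNK
  · have hN0 : N = 0 := by omega
    have h1 : minVal σ m₀ = 0 := minVal_of_zero hN0 σ m₀
    have h2 : ∀ ε : ℝ, minVal τ (fun i : Fin (N + K) =>
        if (i : ℕ) < N then m i else ε * m i) = 0 := fun ε => minVal_of_zero hNK τ _
    simp only [h2, h1]
    exact tendsto_const_nhds
  -- main case
  have hlow : ∀ ε : ℝ, 0 < ε → minVal σ m₀ ≤ minVal τ (fun i : Fin (N + K) =>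
      if (i : ℕ) < N then m i else ε * m i) := by
    intro ε hε
    apply le_csInf (minSet_nonempty hNK τ (hmεpos ε hε))
    rintro u ⟨x, hxτ, hxI, rfl⟩
    rcases Nat.eq_zero_or_pos N with hN0 | hNpos
    · rw [minVal_of_zero hN0 σ m₀]
      exact Upot_nonneg (fun i => (hmεpos ε hε i).le) x
    · set x₀ : Fin N → ℝ := fun i => x (Fin.castAdd K i) with hx₀
      have hx₀σ : StrictMono (x₀ ∘ σ) := hcompat x hxτ
      have hI₀le : inertia m₀ x₀ ≤ 1 := by
        rw [← hxI]
        exact inertia_trunc_le m₀ _ (fun i => (hmεpos ε hε i).le) (hm₀agree ε) x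
      rcases Nat.lt_or_ge N 2 with hN1 | hN2
      · -- N = 1 : minVal σ m₀ ≤ 0 ≤ u
        obtain ⟨u₀, hu₀⟩ := minSet_nonempty hNpos σ hm₀pos
        have hle : minVal σ m₀ ≤ u₀ := csInf_le (minSet_bddBelow σ (fun i => (hm₀pos i).le)) hu₀
        obtain ⟨x', -, -, rfl⟩ := hu₀
        rw [Upot_subsingleton (by omega) m₀ x'] at hle
        exact hle.trans (Upot_nonneg (fun i => (hmεpos ε hε i).le) x)
      · -- N ≥ 2
        have h01 : x₀ (σ ⟨0, by omega⟩) < x₀ (σ ⟨1, by omega⟩) := by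
          apply hx₀σ
          rw [Fin.lt_def]
          norm_num
        have hI₀pos : 0 < inertia m₀ x₀ := by
          have hkey : ∃ k, x₀ k ≠ 0 := by
            by_contra hc
            push_neg at hc
            rw [hc (σ ⟨0, by omega⟩), hc (σ ⟨1, by omega⟩)] at h01
            exact lt_irrefl _ h01
          obtain ⟨k, hk⟩ := hkey
          rw [inertia]
          apply Finset.sum_pos' (fun i _ => mul_nonneg (hm₀pos i).le (sq_nonneg _))
          exact ⟨k, Finset.mem_univ _,
            mul_pos (hm₀pos k) (lt_of_le_of_ne (sq_nonneg _) (Ne.symm (pow_ne_zero 2 hk)))⟩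
        set c : ℝ := (Real.sqrt (inertia m₀ x₀))⁻¹ with hc
        have hcpos : 0 < c := by positivity
        have hc1 : 1 ≤ c := by
          rw [hc, one_le_inv_iff₀]
          refine ⟨Real.sqrt_pos.mpr hI₀pos, ?_⟩
          rw [show (1:ℝ) = Real.sqrt 1 from (Real.sqrt_one).symm]
          exact Real.sqrt_le_sqrt hI₀le
        have hmemσ : Upot m₀ (fun i => c * x₀ i) ∈
            {u : ℝ | ∃ y : Fin N → ℝ, StrictMono (y ∘ σ) ∧ inertia m₀ y = 1
              ∧ u = Upot m₀ y} := by
          refine ⟨fun i => c * x₀ i, ?_, ?_, rfl⟩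
          · intro i j hij
            exact mul_lt_mul_of_pos_left (hx₀σ hij) hcpos
          · rw [inertia_scale, hc, ← Real.sqrt_inv, Real.sq_sqrt (by positivity)]
            field_simp
        calc minVal σ m₀ ≤ Upot m₀ (fun i => c * x₀ i) :=
              csInf_le (minSet_bddBelow σ (fun i => (hm₀pos i).le)) hmemσ
          _ = Upot m₀ x₀ / c := Upot_scale m₀ x₀ hcpos
          _ ≤ Upot m₀ x₀ := div_le_self (Upot_nonneg (fun i => (hm₀pos i).le) x₀) hc1
          _ ≤ _ := Upot_trunc_le m₀ _ (fun i => (hmεpos ε hε i).le) (hm₀agree ε) x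
  rw [tendsto_order]
  constructor
  · intro b hb
    filter_upwards [self_mem_nhdsWithin] with ε hε
    exact hb.trans_le (hlow ε hε)
  · intro b hb
    set δ := b - minVal σ m₀ with hδ
    have hδpos : 0 < δ := sub_pos.mpr hb
    -- construct a near-optimal configuration and its extension
    obtain ⟨x₀, x, hx₀lt, hxτ, hxc, hpos⟩ : ∃ (x₀ : Fin N → ℝ) (x : Fin (N+K) → ℝ),
        Upot m₀ x₀ < minVal σ m₀ + δ/2 ∧ StrictMono (x ∘ τ) ∧
        (∀ i : Fin N, x (Fin.castAdd K i) = x₀ i) ∧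
        (inertia m₀ x₀ = 1 ∨ (N = 0 ∧
          0 < ∑ j : Fin K, m (Fin.natAdd N j) * x (Fin.natAdd N j) ^ 2)) := by
      rcases Nat.eq_zero_or_pos N with hN0 | hNpos
      · set x : Fin (N+K) → ℝ := fun i => ((τ.symm i : ℕ) : ℝ) + 1 with hx
        refine ⟨fun i => x (Fin.castAdd K i), x, ?_, ?_, fun i => rfl, Or.inr ⟨hN0, ?_⟩⟩
        · rw [Upot_subsingleton (by omega) m₀ _, minVal_of_zero hN0 σ m₀]
          linarith
        · intro q q' hqq'
          simp only [Function.comp_apply, hx, Equiv.symm_apply_apply]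
          have : ((q:ℕ):ℝ) < ((q':ℕ):ℝ) := by exact_mod_cast hqq'
          linarith
        · apply Finset.sum_pos
          · intro j _
            apply mul_pos (hm _)
            have : (1:ℝ) ≤ x (Fin.natAdd N j) := by
              simp only [hx]
              have : (0:ℝ) ≤ ((τ.symm (Fin.natAdd N j) : ℕ) : ℝ) := by positivity
              linarith
            positivity
          · exact ⟨⟨0, by omega⟩, Finset.mem_univ _⟩
      · obtain ⟨u₀, hu₀S, hu₀lt⟩ := Real.lt_sInf_add_pos (minSet_nonempty hNpos σ hm₀pos)
          (half_pos hδpos)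
        obtain ⟨x₀, hx₀σ, hx₀I, rfl⟩ := hu₀S
        have hpmono : StrictMono (fun n : Fin N => τ.symm (Fin.castAdd K (σ n))) := by
          have hw : StrictMono ((fun i : Fin (N+K) => ((τ.symm i : ℕ) : ℝ)) ∘ τ) := by
            intro q q' hqq'
            simp only [Function.comp_apply, Equiv.symm_apply_apply]
            exact_mod_cast hqq'
          have hcw := hcompat _ hw
          intro n n' hnn'
          have h2 : ((τ.symm (Fin.castAdd K (σ n)) : ℕ) : ℝ)
              < ((τ.symm (Fin.castAdd K (σ n')) : ℕ) : ℝ) := hcw hnn'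
          rw [Fin.lt_def]
          exact_mod_cast h2
        obtain ⟨g, hg, hgp⟩ := exists_strictMono_extension hNpos _ hpmono
          (fun n => x₀ (σ n)) (fun n n' h => hx₀σ h)
        refine ⟨x₀, fun i => g (τ.symm i), hu₀lt, ?_, ?_, Or.inl hx₀I⟩
        · have : (fun i => g (τ.symm i)) ∘ τ = g := by
            funext q
            simp
          rw [this]
          exact hg
        · intro i
          have := hgp (σ.symm i)
          simpa using this
    -- the scaling function
    set C := ∑ j : Fin K, m (Fin.natAdd N j) * x (Fin.natAdd N j) ^ 2 with hC
    have hC0 : 0 ≤ C := Finset.sum_nonneg fun j _ => mul_nonneg (hm _).le (sq_nonneg _)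
    have hxcast : (fun i : Fin N => x (Fin.castAdd K i)) = x₀ := funext hxc
    have hIx : ∀ ε : ℝ, inertia (fun i : Fin (N+K) =>
        if (i:ℕ) < N then m i else ε * m i) x = inertia m₀ x₀ + ε * C := by
      intro ε
      rw [inertia_split m x ε, hxcast, ← hC]
      congr 2
      rw [hm₀]
    have hI₀0 : 0 ≤ inertia m₀ x₀ := inertia_nonneg (fun i => (hm₀pos i).le) x₀
    have hT : ∀ ε : ℝ, 0 < ε → 0 < inertia m₀ x₀ + ε * C := by
      intro ε hε
      rcases hpos with h | ⟨-, h⟩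
      · nlinarith
      · nlinarith
    set F : ℝ → ℝ := fun ε => Real.sqrt (inertia m₀ x₀ + ε * C) *
      Upot (fun i : Fin (N+K) => if (i:ℕ) < N then m i else ε * m i) x with hF
    have hUcont : Continuous (fun ε : ℝ =>
        Upot (fun i : Fin (N+K) => if (i:ℕ) < N then m i else ε * m i) x) := by
      unfold Upot
      apply continuous_finset_sum
      intro i _
      apply continuous_finset_sum
      intro j _
      apply Continuous.div_const
      apply Continuous.mul
      · by_cases hi : (i:ℕ) < N
        · simp only [if_pos hi]; exact continuous_const
        · simp only [if_neg hi]; exact continuous_id.mul continuous_const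
      · by_cases hj : (j:ℕ) < N
        · simp only [if_pos hj]; exact continuous_const
        · simp only [if_neg hj]; exact continuous_id.mul continuous_const
    have hFcont : Continuous F := by
      rw [hF]
      exact (Real.continuous_sqrt.comp
        (continuous_const.add (continuous_id.mul continuous_const))).mul hUcont
    have hF0 : F 0 = Upot m₀ x₀ := by
      rw [hF]
      simp only [zero_mul, add_zero]
      have hUeq : Upot (fun i : Fin (N+K) => if (i:ℕ) < N then m i else 0) x
          = Upot m₀ x₀ := by
        rw [Upot_trunc_eq m₀ _ ?_ ?_ x, hxcast]
        · intro i
          rw [if_pos (by simpa using i.isLt), hm₀]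
        · intro j hj
          rw [if_neg (by omega)]
      rw [hUeq]
      rcases hpos with h | ⟨hN0, -⟩
      · rw [h, Real.sqrt_one, one_mul]
      · rw [Upot_subsingleton (by omega) m₀ x₀, mul_zero]
    have hF0lt : F 0 < b := by
      rw [hF0]
      have : minVal σ m₀ + δ/2 < b := by rw [hδ]; linarith
      exact hx₀lt.trans this
    have hFtend : Filter.Tendsto F (nhdsWithin 0 (Set.Ioi 0)) (nhds (F 0)) :=
      (hFcont.tendsto 0).mono_left nhdsWithin_le_nhds
    have hev : ∀ᶠ ε in nhdsWithin 0 (Set.Ioi 0), F ε < b :=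
      hFtend.eventually_lt_const hF0lt
    filter_upwards [hev, self_mem_nhdsWithin] with ε hFε hε
    have hεpos : 0 < ε := hε
    have hTε : 0 < inertia m₀ x₀ + ε * C := hT ε hεpos
    set c : ℝ := (Real.sqrt (inertia m₀ x₀ + ε * C))⁻¹ with hc
    have hcpos : 0 < c := by positivity
    have hmemτ : Upot (fun i : Fin (N+K) => if (i:ℕ) < N then m i else ε * m i)
        (fun i => c * x i) ∈
        {u : ℝ | ∃ y : Fin (N+K) → ℝ, StrictMono (y ∘ τ) ∧
          inertia (fun i : Fin (N+K) => if (i:ℕ) < N then m i else ε * m i) y = 1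
          ∧ u = Upot (fun i : Fin (N+K) => if (i:ℕ) < N then m i else ε * m i) y} := by
      refine ⟨fun i => c * x i, ?_, ?_, rfl⟩
      · intro q q' hqq'
        exact mul_lt_mul_of_pos_left (hxτ hqq') hcpos
      · rw [inertia_scale, hIx ε, hc, ← Real.sqrt_inv, Real.sq_sqrt (by positivity)]
        field_simp
    have hle : minVal τ (fun i : Fin (N+K) => if (i:ℕ) < N then m i else ε * m i)
        ≤ F ε := by
      have h1 := csInf_le (minSet_bddBelow τ (fun i => (hmεpos ε hεpos i).le)) hmemτ
      have h2 : Upot (fun i : Fin (N+K) => if (i:ℕ) < N then m i else ε * m i)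
          (fun i => c * x i) = F ε := by
        rw [Upot_scale _ _ hcpos, hc, div_eq_mul_inv, inv_inv]
        simp only [hF]
        ring
      rw [← h2]
      exact h1
    exact hle.trans_lt hFε
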